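/- arXiv:1208.5892 — 2 statements merged into one kernel-verified Lean document; each statement's English description precedes it below -/
import Mathlib

section
/- For reals Λᵢ, Λⱼ > 0, a ∈ ℝ, and tᵢ, tⱼ > a, with N ≥ 3, the inequality ΛᵢΛⱼ / (tᵢ + tⱼ − 2a)^(N−2) ≤ Λᵢ² / (2·(2tᵢ − 2a)^(N−2)) + Λⱼ² / (2·(2tⱼ − 2a)^(N−2)) holds. -/
theorem stmt3 (N : ℕ) (hN : 3 ≤ N) (a ti tj Λi Λj : ℝ)
    (hΛi : 0 < Λi) (hΛj : 0 < Λj) (hti : a < ti) (htj : a < tj) :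
    Λi * Λj / (ti + tj - 2 * a) ^ (N - 2) ≤
      Λi ^ 2 / (2 * (2 * ti - 2 * a) ^ (N - 2)) +
        Λj ^ 2 / (2 * (2 * tj - 2 * a) ^ (N - 2)) := by
  set n := N - 2 with hn
  have hu : (0:ℝ) < 2 * ti - 2 * a := by linarith
  have hv : (0:ℝ) < 2 * tj - 2 * a := by linarith
  set u := 2 * ti - 2 * a with hu'
  set v := 2 * tj - 2 * a with hv'
  have hp : (0:ℝ) < u ^ n := pow_pos hu n
  have hq : (0:ℝ) < v ^ n := pow_pos hv n
  have huv : (0:ℝ) < u + v := by linarith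
  have hw : (0:ℝ) < (u + v) ^ n := pow_pos huv n
  have hsum : ti + tj - 2 * a = (u + v) / 2 := by rw [hu', hv']; ring
  have hkey : ((2:ℝ) ^ n) ^ 2 * (u ^ n * v ^ n) ≤ ((u + v) ^ n) ^ 2 := by
    calc ((2:ℝ) ^ n) ^ 2 * (u ^ n * v ^ n) = (4 * u * v) ^ n := by
          rw [show (4:ℝ) * u * v = 2 * 2 * u * v by ring]
          rw [show ((2:ℝ) * 2 * u * v) ^ n = 2 ^ n * 2 ^ n * u ^ n * v ^ n by
            rw [← mul_pow, ← mul_pow, ← mul_pow]]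
          ring
      _ ≤ ((u + v) ^ 2) ^ n := by
          apply pow_le_pow_left₀ (by positivity)
          nlinarith [sq_nonneg (u - v)]
      _ = ((u + v) ^ n) ^ 2 := by rw [← pow_mul, ← pow_mul, Nat.mul_comm]
  have hS : 4 * (Λi * Λj) ^ 2 * (u ^ n * v ^ n) ≤ (Λi ^ 2 * v ^ n + Λj ^ 2 * u ^ n) ^ 2 := by
    nlinarith [sq_nonneg (Λi ^ 2 * v ^ n - Λj ^ 2 * u ^ n)]
  have hmain : 2 ^ n * (Λi * Λj) * (u ^ n * v ^ n) * 2 ≤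
      (u + v) ^ n * (Λi ^ 2 * v ^ n + Λj ^ 2 * u ^ n) := by
    have hA : (0:ℝ) ≤ 2 ^ n * (Λi * Λj) * (u ^ n * v ^ n) * 2 := by positivity
    have hB : (0:ℝ) ≤ (u + v) ^ n * (Λi ^ 2 * v ^ n + Λj ^ 2 * u ^ n) := by positivity
    have hsq : (2 ^ n * (Λi * Λj) * (u ^ n * v ^ n) * 2) ^ 2 ≤
        ((u + v) ^ n * (Λi ^ 2 * v ^ n + Λj ^ 2 * u ^ n)) ^ 2 := by
      calc (2 ^ n * (Λi * Λj) * (u ^ n * v ^ n) * 2) ^ 2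
          = (((2:ℝ) ^ n) ^ 2 * (u ^ n * v ^ n)) * (4 * (Λi * Λj) ^ 2 * (u ^ n * v ^ n)) := by
            ring
        _ ≤ ((u + v) ^ n) ^ 2 * (Λi ^ 2 * v ^ n + Λj ^ 2 * u ^ n) ^ 2 :=
            mul_le_mul hkey hS (by positivity) (by positivity)
        _ = ((u + v) ^ n * (Λi ^ 2 * v ^ n + Λj ^ 2 * u ^ n)) ^ 2 := by ring
    exact le_of_pow_le_pow_left₀ two_ne_zero hB hsq
  rw [hsum, div_pow, div_div_eq_mul_div,
    div_add_div _ _ (by positivity) (by positivity),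
    div_le_div_iff₀ hw (by positivity)]
  nlinarith [hmain]
end

section
/- Let Φ(Λ, t) = (1/2)Σᵢ₌₁⁴ Λᵢ² h(tᵢ,tᵢ) + Σ_{i<j} ΛᵢΛⱼ g(tᵢ,tⱼ) − log(Λ₁Λ₂Λ₃Λ₄) on M = {Λᵢ > 0, a < t₁ < t₂ < t₃ < t₄ < b}, where h(t,t) ≥ H₀ > 0, h(t,t) → +∞ as t → a⁺ or t → b⁻, g > 0, and g(t,s) → +∞ as |t − s| → 0. Then Φ(Λ,t) → +∞ as (Λ,t) → ∂M, i.e., Φ is coercive: its sublevel sets {Φ < M} are compactly contained in M. -/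
private lemma key1 (Λ H : ℝ) (hΛ : 0 < Λ) (hH : 0 < H) :
    1/2 + Real.log H / 2 ≤ Λ^2 * H / 2 - Real.log Λ := by
  have h1 : Real.log (Λ^2*H) ≤ Λ^2*H - 1 := Real.log_le_sub_one_of_pos (by positivity)
  have h2 : Real.log (Λ^2*H) = 2*Real.log Λ + Real.log H := by
    rw [Real.log_mul (by positivity) hH.ne', Real.log_pow]; push_cast; ring
  linarith

private lemma key2 (Λ H H₀ : ℝ) (hΛ : 0 < Λ) (hH0 : 0 < H₀) (hH : H₀ ≤ H) :
    Λ^2*H/4 + |Real.log Λ| - max 0 (-(1 + Real.log (H₀/4))) ≤ Λ^2*H/2 - Real.log Λ := by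
  have hHpos : 0 < H := lt_of_lt_of_le hH0 hH
  have hC : -(1 + Real.log (H₀/4)) ≤ max 0 (-(1 + Real.log (H₀/4))) := le_max_right _ _
  rcases le_or_gt Λ 1 with h1 | h1
  · have hl : Real.log Λ ≤ 0 := Real.log_nonpos hΛ.le h1
    have habs : |Real.log Λ| = -Real.log Λ := abs_of_nonpos hl
    have hC0 : (0:ℝ) ≤ max 0 (-(1 + Real.log (H₀/4))) := le_max_left _ _
    have hq : 0 ≤ Λ^2*H := by positivity
    rw [habs]; linarith
  · have habs : |Real.log Λ| = Real.log Λ := abs_of_pos (Real.log_pos h1)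
    have hk := key1 Λ (H/4) hΛ (by positivity)
    have heq : Λ^2*(H/4)/2 = Λ^2*H/8 := by ring
    have hmono : Real.log (H₀/4) ≤ Real.log (H/4) := by
      gcongr
    rw [habs]; linarith

private lemma small_case (T Λ H : ℝ) (hΛ : 0 < Λ) (hH : 0 ≤ H) (hlt : Real.log Λ < -T) :
    T < Λ^2*H/4 + |Real.log Λ| := by
  have h1 : -Real.log Λ ≤ |Real.log Λ| := neg_le_abs _
  have h2 : 0 ≤ Λ^2*H/4 := by
    have := mul_nonneg (sq_nonneg Λ) hH; linarith
  linarith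

private lemma large_case (T Λ H δ : ℝ) (hδ : 0 < δ) (hΛ : δ⁻¹ < Λ)
    (hbd : δ^2*(4*(|T|+1)) ≤ H) : T < Λ^2*H/4 := by
  have hΛ0 : 0 < Λ := lt_trans (by positivity) hΛ
  have h1 : 1 < Λ * δ := by rw [inv_eq_one_div, div_lt_iff₀ hδ] at hΛ; linarith
  have h2 : 1 < (Λ*δ)^2 := by nlinarith
  have h3 : Λ^2 * (δ^2*(4*(|T|+1))) ≤ Λ^2 * H := mul_le_mul_of_nonneg_left hbd (sq_nonneg Λ)
  have h4 : T ≤ |T| := le_abs_self T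
  nlinarith [abs_nonneg T]

private lemma blow_case (T Λ H : ℝ) (hΛ : 0 < Λ) (hH : 2*Real.exp (2*T) < H) :
    T < Λ^2*H/4 + |Real.log Λ| := by
  have hHpos : 0 < H := lt_trans (by positivity) hH
  have hk := key1 Λ (H/2) hΛ (by positivity)
  have heq : Λ^2*(H/2)/2 = Λ^2*H/4 := by ring
  have hlog : 2*T < Real.log (H/2) := by
    have hx : Real.exp (2*T) < H/2 := by linarith
    calc 2*T = Real.log (Real.exp (2*T)) := (Real.log_exp _).symm
    _ < Real.log (H/2) := Real.log_lt_log (Real.exp_pos _) hx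
  have := neg_le_abs (Real.log Λ)
  linarith

private lemma gap_case (T ε Λi Λj G : ℝ) (hε : 0 < ε) (hi : ε ≤ Λi) (hj : ε ≤ Λj)
    (hGpos : 0 < G) (hG : T/ε^2 < G) : T < Λi*Λj*G := by
  have h1 : T < ε^2*G := by rw [div_lt_iff₀ (by positivity)] at hG; nlinarith
  have h2 : ε^2*G ≤ Λi*Λj*G := by
    apply mul_le_mul_of_nonneg_right _ hGpos.le
    calc ε^2 = ε*ε := by ring
    _ ≤ Λi*Λj := mul_le_mul hi hj hε.le (hε.le.trans hi)
  linarith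

set_option maxHeartbeats 2000000 in
/-- Coercivity of `Φ` on the configuration space `M`: `Φ(Λ,t) → +∞` as `(Λ,t) → ∂M`. -/
theorem stmt18 (a b H₀ : ℝ) (hab : a < b) (hH : 0 < H₀) (h g : ℝ → ℝ → ℝ)
    (hcont : ContinuousOn (fun p : ℝ × ℝ => h p.1 p.2) (Set.Ioo a b ×ˢ Set.Ioo a b))
    (hh : ∀ t ∈ Set.Ioo a b, H₀ ≤ h t t)
    (hhblow : ∀ M : ℝ, ∃ δ > 0, ∀ t ∈ Set.Ioo a b, t < a + δ ∨ b - δ < t → M < h t t)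
    (hgpos : ∀ t ∈ Set.Ioo a b, ∀ s ∈ Set.Ioo a b, t ≠ s → 0 < g t s)
    (hgcont : ContinuousOn (fun p : ℝ × ℝ => g p.1 p.2)
      {p : ℝ × ℝ | p.1 ∈ Set.Ioo a b ∧ p.2 ∈ Set.Ioo a b ∧ p.1 ≠ p.2})
    (hgblow : ∀ M : ℝ, ∃ δ > 0, ∀ t ∈ Set.Ioo a b, ∀ s ∈ Set.Ioo a b,
      t ≠ s → |t - s| < δ → M < g t s) :
    ∀ M' : ℝ, ∃ δ > 0, ∀ Λ₁ Λ₂ Λ₃ Λ₄ t₁ t₂ t₃ t₄ : ℝ,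
      0 < Λ₁ → 0 < Λ₂ → 0 < Λ₃ → 0 < Λ₄ →
      a < t₁ → t₁ < t₂ → t₂ < t₃ → t₃ < t₄ → t₄ < b →
      (Λ₁ < δ ∨ Λ₂ < δ ∨ Λ₃ < δ ∨ Λ₄ < δ ∨
       δ⁻¹ < Λ₁ ∨ δ⁻¹ < Λ₂ ∨ δ⁻¹ < Λ₃ ∨ δ⁻¹ < Λ₄ ∨
       t₁ < a + δ ∨ b - δ < t₄ ∨ t₂ - t₁ < δ ∨ t₃ - t₂ < δ ∨ t₄ - t₃ < δ) →
      M' < (1 / 2) * (Λ₁ ^ 2 * h t₁ t₁ + Λ₂ ^ 2 * h t₂ t₂ + Λ₃ ^ 2 * h t₃ t₃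
              + Λ₄ ^ 2 * h t₄ t₄)
            + (Λ₁ * Λ₂ * g t₁ t₂ + Λ₁ * Λ₃ * g t₁ t₃ + Λ₁ * Λ₄ * g t₁ t₄
              + Λ₂ * Λ₃ * g t₂ t₃ + Λ₂ * Λ₄ * g t₂ t₄ + Λ₃ * Λ₄ * g t₃ t₄)
            - Real.log (Λ₁ * Λ₂ * Λ₃ * Λ₄) := by
  intro M'
  set C : ℝ := max 0 (-(1 + Real.log (H₀/4))) with hCdef
  have hC0 : 0 ≤ C := le_max_left _ _
  set T : ℝ := M' + 4*C with hTdef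
  set E : ℝ := Real.exp (-(T+1)) with hEdef
  have hEpos : 0 < E := Real.exp_pos _
  have hElog : Real.log E = -(T+1) := Real.log_exp _
  obtain ⟨δh, hδhpos, Hh⟩ := hhblow (2 * Real.exp (2*T))
  obtain ⟨δg, hδgpos, Hg⟩ := hgblow (T / E^2)
  set δ : ℝ := min (min (Real.exp (-T)) (Real.sqrt (H₀/(4*(|T|+1)))))
      (min δh (min δg 1)) with hδdef
  have hδpos : 0 < δ :=
    lt_min (lt_min (Real.exp_pos _) (Real.sqrt_pos.mpr (by positivity)))
      (lt_min hδhpos (lt_min hδgpos one_pos))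
  refine ⟨δ, hδpos, ?_⟩
  intro Λ₁ Λ₂ Λ₃ Λ₄ t₁ t₂ t₃ t₄ hΛ₁ hΛ₂ hΛ₃ hΛ₄ ht1 ht12 ht23 ht34 ht4 hcase
  -- basic facts about δ
  have hδ_exp : δ ≤ Real.exp (-T) := le_trans (min_le_left _ _) (min_le_left _ _)
  have hδ_sqrt : δ ≤ Real.sqrt (H₀/(4*(|T|+1))) := le_trans (min_le_left _ _) (min_le_right _ _)
  have hδ_h : δ ≤ δh := le_trans (min_le_right _ _) (min_le_left _ _)
  have hδ_g : δ ≤ δg := le_trans (min_le_right _ _) (le_trans (min_le_right _ _) (min_le_left _ _))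
  have hδlog : Real.log δ ≤ -T := by
    calc Real.log δ ≤ Real.log (Real.exp (-T)) :=
          Real.log_le_log (by positivity) hδ_exp
    _ = -T := Real.log_exp _
  have hbd0 : δ^2*(4*(|T|+1)) ≤ H₀ := by
    have hx : (0:ℝ) ≤ H₀/(4*(|T|+1)) := by positivity
    have h2 := Real.sq_sqrt hx
    have hsq : δ^2 ≤ H₀/(4*(|T|+1)) := by nlinarith [hδpos.le, hδ_sqrt]
    rw [le_div_iff₀ (by positivity)] at hsq
    linarith
  -- memberships
  have hm1 : t₁ ∈ Set.Ioo a b := ⟨ht1, by linarith⟩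
  have hm2 : t₂ ∈ Set.Ioo a b := ⟨by linarith, by linarith⟩
  have hm3 : t₃ ∈ Set.Ioo a b := ⟨by linarith, by linarith⟩
  have hm4 : t₄ ∈ Set.Ioo a b := ⟨by linarith, by linarith⟩
  have hh1 := hh t₁ hm1
  have hh2 := hh t₂ hm2
  have hh3 := hh t₃ hm3
  have hh4 := hh t₄ hm4
  have hh1' : 0 < h t₁ t₁ := lt_of_lt_of_le hH hh1
  have hh2' : 0 < h t₂ t₂ := lt_of_lt_of_le hH hh2
  have hh3' : 0 < h t₃ t₃ := lt_of_lt_of_le hH hh3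
  have hh4' : 0 < h t₄ t₄ := lt_of_lt_of_le hH hh4
  -- key2 instances
  have k1 := key2 Λ₁ (h t₁ t₁) H₀ hΛ₁ hH hh1
  have k2 := key2 Λ₂ (h t₂ t₂) H₀ hΛ₂ hH hh2
  have k3 := key2 Λ₃ (h t₃ t₃) H₀ hΛ₃ hH hh3
  have k4 := key2 Λ₄ (h t₄ t₄) H₀ hΛ₄ hH hh4
  rw [← hCdef] at k1 k2 k3 k4
  -- log of product
  have hlog : Real.log (Λ₁ * Λ₂ * Λ₃ * Λ₄)
      = Real.log Λ₁ + Real.log Λ₂ + Real.log Λ₃ + Real.log Λ₄ := by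
    rw [Real.log_mul (by positivity) (by positivity),
        Real.log_mul (by positivity) (by positivity),
        Real.log_mul (by positivity) (by positivity)]
  -- nonnegativity of diagonal terms
  have d1 : 0 ≤ Λ₁^2 * h t₁ t₁/4 + |Real.log Λ₁| :=
    add_nonneg (by positivity) (abs_nonneg _)
  have d2 : 0 ≤ Λ₂^2 * h t₂ t₂/4 + |Real.log Λ₂| :=
    add_nonneg (by positivity) (abs_nonneg _)
  have d3 : 0 ≤ Λ₃^2 * h t₃ t₃/4 + |Real.log Λ₃| :=
    add_nonneg (by positivity) (abs_nonneg _)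
  have d4 : 0 ≤ Λ₄^2 * h t₄ t₄/4 + |Real.log Λ₄| :=
    add_nonneg (by positivity) (abs_nonneg _)
  -- positivity of cross terms
  have g12 : 0 < g t₁ t₂ := hgpos t₁ hm1 t₂ hm2 (ne_of_lt ht12)
  have g13 : 0 < g t₁ t₃ := hgpos t₁ hm1 t₃ hm3 (ne_of_lt (by linarith))
  have g14 : 0 < g t₁ t₄ := hgpos t₁ hm1 t₄ hm4 (ne_of_lt (by linarith))
  have g23 : 0 < g t₂ t₃ := hgpos t₂ hm2 t₃ hm3 (ne_of_lt ht23)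
  have g24 : 0 < g t₂ t₄ := hgpos t₂ hm2 t₄ hm4 (ne_of_lt (by linarith))
  have g34 : 0 < g t₃ t₄ := hgpos t₃ hm3 t₄ hm4 (ne_of_lt ht34)
  have c12 : 0 ≤ Λ₁ * Λ₂ * g t₁ t₂ := (mul_pos (mul_pos hΛ₁ hΛ₂) g12).le
  have c13 : 0 ≤ Λ₁ * Λ₃ * g t₁ t₃ := (mul_pos (mul_pos hΛ₁ hΛ₃) g13).le
  have c14 : 0 ≤ Λ₁ * Λ₄ * g t₁ t₄ := (mul_pos (mul_pos hΛ₁ hΛ₄) g14).le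
  have c23 : 0 ≤ Λ₂ * Λ₃ * g t₂ t₃ := (mul_pos (mul_pos hΛ₂ hΛ₃) g23).le
  have c24 : 0 ≤ Λ₂ * Λ₄ * g t₂ t₄ := (mul_pos (mul_pos hΛ₂ hΛ₄) g24).le
  have c34 : 0 ≤ Λ₃ * Λ₄ * g t₃ t₄ := (mul_pos (mul_pos hΛ₃ hΛ₄) g34).le
  -- it suffices to make one of the lower-bound terms exceed T
  rcases hcase with hc | hc | hc | hc | hc | hc | hc | hc | hc | hc | hc | hc | hc
  · -- Λ₁ < δ
    have := small_case T Λ₁ (h t₁ t₁) hΛ₁ hh1'.le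
      (by calc Real.log Λ₁ < Real.log δ := Real.log_lt_log hΛ₁ hc
          _ ≤ -T := hδlog)
    linarith
  · have := small_case T Λ₂ (h t₂ t₂) hΛ₂ hh2'.le
      (by calc Real.log Λ₂ < Real.log δ := Real.log_lt_log hΛ₂ hc
          _ ≤ -T := hδlog)
    linarith
  · have := small_case T Λ₃ (h t₃ t₃) hΛ₃ hh3'.le
      (by calc Real.log Λ₃ < Real.log δ := Real.log_lt_log hΛ₃ hc
          _ ≤ -T := hδlog)
    linarith
  · have := small_case T Λ₄ (h t₄ t₄) hΛ₄ hh4'.le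
      (by calc Real.log Λ₄ < Real.log δ := Real.log_lt_log hΛ₄ hc
          _ ≤ -T := hδlog)
    linarith
  · -- δ⁻¹ < Λ₁
    have := large_case T Λ₁ (h t₁ t₁) δ hδpos hc (le_trans hbd0 hh1)
    linarith [abs_nonneg (Real.log Λ₁)]
  · have := large_case T Λ₂ (h t₂ t₂) δ hδpos hc (le_trans hbd0 hh2)
    linarith [abs_nonneg (Real.log Λ₂)]
  · have := large_case T Λ₃ (h t₃ t₃) δ hδpos hc (le_trans hbd0 hh3)
    linarith [abs_nonneg (Real.log Λ₃)]
  · have := large_case T Λ₄ (h t₄ t₄) δ hδpos hc (le_trans hbd0 hh4)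
    linarith [abs_nonneg (Real.log Λ₄)]
  · -- t₁ < a + δ
    have hb := Hh t₁ hm1 (Or.inl (by linarith))
    have := blow_case T Λ₁ (h t₁ t₁) hΛ₁ hb
    linarith
  · -- b - δ < t₄
    have hb := Hh t₄ hm4 (Or.inr (by linarith))
    have := blow_case T Λ₄ (h t₄ t₄) hΛ₄ hb
    linarith
  · -- t₂ - t₁ < δ
    have habs : |t₁ - t₂| < δg := by
      rw [abs_sub_comm, abs_of_pos (by linarith : (0:ℝ) < t₂ - t₁)]; linarith
    have hG := Hg t₁ hm1 t₂ hm2 (ne_of_lt ht12) habs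
    rcases lt_or_ge Λ₁ E with hE1 | hE1
    · have := small_case T Λ₁ (h t₁ t₁) hΛ₁ hh1'.le
        (by have := Real.log_lt_log hΛ₁ hE1; rw [hElog] at this; linarith)
      linarith
    rcases lt_or_ge Λ₂ E with hE2 | hE2
    · have := small_case T Λ₂ (h t₂ t₂) hΛ₂ hh2'.le
        (by have := Real.log_lt_log hΛ₂ hE2; rw [hElog] at this; linarith)
      linarith
    · have := gap_case T E Λ₁ Λ₂ (g t₁ t₂) hEpos hE1 hE2 g12 hG
      linarith
  · -- t₃ - t₂ < δ
    have habs : |t₂ - t₃| < δg := by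
      rw [abs_sub_comm, abs_of_pos (by linarith : (0:ℝ) < t₃ - t₂)]; linarith
    have hG := Hg t₂ hm2 t₃ hm3 (ne_of_lt ht23) habs
    rcases lt_or_ge Λ₂ E with hE1 | hE1
    · have := small_case T Λ₂ (h t₂ t₂) hΛ₂ hh2'.le
        (by have := Real.log_lt_log hΛ₂ hE1; rw [hElog] at this; linarith)
      linarith
    rcases lt_or_ge Λ₃ E with hE2 | hE2
    · have := small_case T Λ₃ (h t₃ t₃) hΛ₃ hh3'.le
        (by have := Real.log_lt_log hΛ₃ hE2; rw [hElog] at this; linarith)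
      linarith
    · have := gap_case T E Λ₂ Λ₃ (g t₂ t₃) hEpos hE1 hE2 g23 hG
      linarith
  · -- t₄ - t₃ < δ
    have habs : |t₃ - t₄| < δg := by
      rw [abs_sub_comm, abs_of_pos (by linarith : (0:ℝ) < t₄ - t₃)]; linarith
    have hG := Hg t₃ hm3 t₄ hm4 (ne_of_lt ht34) habs
    rcases lt_or_ge Λ₃ E with hE1 | hE1
    · have := small_case T Λ₃ (h t₃ t₃) hΛ₃ hh3'.le
        (by have := Real.log_lt_log hΛ₃ hE1; rw [hElog] at this; linarith)
      linarith
    rcases lt_or_ge Λ₄ E with hE2 | hE2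
    · have := small_case T Λ₄ (h t₄ t₄) hΛ₄ hh4'.le
        (by have := Real.log_lt_log hΛ₄ hE2; rw [hElog] at this; linarith)
      linarith
    · have := gap_case T E Λ₃ Λ₄ (g t₃ t₄) hEpos hE1 hE2 g34 hG
      linarith
end
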